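/- The number of pairs of twins among permutations of [n] equals (n−1)!, and the double edges of the cluster graph decompose into exactly (n−2)! vertex-disjoint directed cycles, each of length n−1. -/

import Mathlib

/-- `reduce w` replaces each copy of the i-th smallest value of `w` by `i`. -/
def reduce {m : ℕ} (w : Fin m → ℕ) : Fin m → ℕ :=
  fun i => ((Finset.univ.image w).filter (fun v => v ≤ w i)).card

/-- The first `n-1` letters of a word of length `n`. -/
def firstw {n : ℕ} (w : Fin n → ℕ) : Fin (n - 1) → ℕ :=
  fun i => w (Fin.castLE (Nat.sub_le n 1) i)

/-- The last `n-1` letters of a word of length `n`. -/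
def lastw {n : ℕ} (w : Fin n → ℕ) : Fin (n - 1) → ℕ :=
  fun i => w ⟨i.val + 1, by have := i.isLt; omega⟩

/-- The word (with letters in `{1,…,n}`) associated with a permutation of `[n]`. -/
def permWord {n : ℕ} (x : Equiv.Perm (Fin n)) : Fin n → ℕ := fun i => (x i : ℕ) + 1

/-- The word of a permutation of `[n-1]` indexing a cluster. -/
def clusterWord {n : ℕ} (σ : Equiv.Perm (Fin (n - 1))) : Fin (n - 1) → ℕ :=
  fun i => (σ i : ℕ) + 1

/-- `x` is an edge of the cluster graph from `σ` to `τ`: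
`reduce(x₁⋯x_{n-1}) = σ` and `reduce(x₂⋯x_n) = τ`. -/
def isEdge {n : ℕ} (x : Equiv.Perm (Fin n)) (σ τ : Equiv.Perm (Fin (n - 1))) : Prop :=
  reduce (firstw (permWord x)) = clusterWord σ ∧ reduce (lastw (permWord x)) = clusterWord τ

/-- `x` is a permutation whose first and last entries differ by 1. -/
def isTwinEnd {n : ℕ} (hn : 2 ≤ n) (x : Equiv.Perm (Fin n)) : Prop :=
  (x ⟨0, by omega⟩ : ℕ) + 1 = x ⟨n - 1, by omega⟩ ∨
    (x ⟨n - 1, by omega⟩ : ℕ) + 1 = x ⟨0, by omega⟩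

/-!
Write a permutation of `[m + 2]` as `permSnoc p σ`: last entry `p`, first `m + 1` entries in the
relative order `σ`, so that the cluster of `σ` is `{permSnoc p σ | p}` (indices start at `0`, so
`σ 0` is the first entry). Its first entry `p.succAbove (σ 0)` is adjacent to `p` exactly when `p`
is `σ 0` or `σ 0 + 1`; hence every cluster contains exactly one pair of twins, `twinPair σ`, and
there are `(m + 1)!` pairs.

For a twin `x` the values `x₁` and `xₙ` are adjacent, so `xₙ` compares with every other entry
exactly as `x₁` does. Hence `x₂⋯xₙ` has the pattern of `x₂⋯xₙ₋₁x₁`, which is `σ` rotated by one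
position, `σ * finRotate (m + 1)`. The double edges are therefore the graph of
`σ ↦ σ * finRotate (m + 1)`; its orbits are cycles of length `m + 1`, and the permutations fixing
`0` meet each of them exactly once.
-/

open Equiv Finset

section

variable {m : ℕ}

lemma reduce_apply_of_injective {k : ℕ} {w : Fin k → ℕ} (hw : Function.Injective w) (i : Fin k) :
    reduce w i = #{j | w j ≤ w i} := by
  rw [reduce, filter_image, card_image_of_injective _ hw]

lemma reduce_congr {k : ℕ} {w w' : Fin k → ℕ} (hw : Function.Injective w)
    (hw' : Function.Injective w') (h : ∀ i j, w i ≤ w j ↔ w' i ≤ w' j) : reduce w = reduce w' := by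
  ext i
  simp only [reduce_apply_of_injective hw, reduce_apply_of_injective hw', h]

lemma clusterWord_injective {n : ℕ} : Function.Injective (clusterWord (n := n)) := by
  intro σ τ h
  ext i
  simpa [clusterWord] using congrFun h i

lemma clusterWord_apply_injective {n : ℕ} (σ : Perm (Fin (n - 1))) :
    Function.Injective (clusterWord σ) := fun i j h =>
  σ.injective (by simpa [clusterWord, Fin.val_inj] using h)

lemma reduce_clusterWord {n : ℕ} (σ : Perm (Fin (n - 1))) :
    reduce (clusterWord σ) = clusterWord σ := by
  ext i
  rw [reduce_apply_of_injective (clusterWord_apply_injective σ)]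
  refine (card_equiv σ fun j => ?_).trans (Fin.card_Iic (σ i))
  rw [Finset.mem_filter, mem_Iic, Fin.le_def]
  simp [clusterWord]

lemma reduce_comp_eq_clusterWord {k : ℕ} {g : Fin k → ℕ} (hg : StrictMono g) (σ : Perm (Fin k)) :
    reduce (g ∘ σ) = clusterWord (n := k + 1) σ := by
  rw [← reduce_clusterWord]
  refine reduce_congr (hg.injective.comp σ.injective) (clusterWord_apply_injective (n := k + 1) σ)
    fun i j => ?_
  simp only [Function.comp_apply, clusterWord, hg.le_iff_le, Fin.le_def]
  omega

def permSnoc (p : Fin (m + 2)) (σ : Perm (Fin (m + 1))) : Perm (Fin (m + 2)) :=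
  finSuccEquivLast.trans (σ.optionCongr.trans (finSuccEquiv' p).symm)

@[simp] lemma permSnoc_castSucc (p : Fin (m + 2)) (σ : Perm (Fin (m + 1))) (i : Fin (m + 1)) :
    permSnoc p σ i.castSucc = p.succAbove (σ i) := by
  simp [permSnoc]

@[simp] lemma permSnoc_last (p : Fin (m + 2)) (σ : Perm (Fin (m + 1))) :
    permSnoc p σ (Fin.last (m + 1)) = p := by
  simp [permSnoc]

lemma permSnoc_injective : Function.Injective (Function.uncurry (permSnoc (m := m))) := by
  rintro ⟨p, σ⟩ ⟨q, τ⟩ h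
  have hp : p = q := by simpa using congr($h (Fin.last _))
  subst hp
  refine Prod.ext rfl (Equiv.ext fun i => ?_)
  simpa using congr($h i.castSucc)

lemma permSnoc_castSucc_ne_permSnoc_succ (a : Fin (m + 1)) (σ : Perm (Fin (m + 1))) :
    permSnoc a.castSucc σ ≠ permSnoc a.succ σ := fun h =>
  (Fin.castSucc_lt_succ (i := a)).ne (by simpa using congr($h (Fin.last _)))

lemma exists_eq_permSnoc (x : Perm (Fin (m + 2))) : ∃ σ, x = permSnoc (x (Fin.last _)) σ := by
  have hbij : Function.Bijective (Function.uncurry (permSnoc (m := m))) := by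
    rw [Fintype.bijective_iff_injective_and_card]
    refine ⟨permSnoc_injective, ?_⟩
    simp [Fintype.card_perm, Nat.factorial_succ]
  obtain ⟨⟨p, σ⟩, rfl⟩ := hbij.2 x
  exact ⟨σ, by simp⟩

lemma reduce_firstw_permSnoc (p : Fin (m + 2)) (σ : Perm (Fin (m + 1))) :
    reduce (firstw (permWord (permSnoc p σ))) = clusterWord (n := m + 2) σ := by
  have hmono : StrictMono fun v : Fin (m + 1) => (p.succAbove v : ℕ) + 1 :=
    fun a b hab => by simpa using Fin.strictMono_succAbove p hab
  have hw : firstw (permWord (permSnoc p σ)) = (fun v => (p.succAbove v : ℕ) + 1) ∘ σ :=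
    funext fun i => congrArg (fun v : Fin (m + 2) => (v : ℕ) + 1) (permSnoc_castSucc p σ i)
  rw [hw]
  exact reduce_comp_eq_clusterWord hmono σ

lemma reduce_firstw_eq_clusterWord_iff (x : Perm (Fin (m + 2))) (σ : Perm (Fin (m + 1))) :
    reduce (firstw (permWord x)) = clusterWord (n := m + 2) σ ↔ ∃ p, x = permSnoc p σ := by
  refine ⟨fun h => ?_, fun ⟨p, hx⟩ => hx ▸ reduce_firstw_permSnoc p σ⟩
  obtain ⟨τ, hx⟩ := exists_eq_permSnoc x
  rw [hx, reduce_firstw_permSnoc] at h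
  exact ⟨_, clusterWord_injective h ▸ hx⟩

lemma val_succAbove_adjacent_iff (p : Fin (m + 2)) (a : Fin (m + 1)) :
    (p.succAbove a : ℕ) + 1 = p ∨ (p : ℕ) + 1 = p.succAbove a ↔ p = a.castSucc ∨ p = a.succ := by
  rcases lt_or_ge a.castSucc p with h | h
  · rw [Fin.succAbove_of_castSucc_lt _ _ h]
    simp only [Fin.ext_iff, Fin.lt_def, Fin.val_castSucc, Fin.val_succ] at h ⊢
    omega
  · rw [Fin.succAbove_of_le_castSucc _ _ h]
    simp only [Fin.ext_iff, Fin.le_def, Fin.val_castSucc, Fin.val_succ] at h ⊢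
    omega

lemma isTwinEnd_permSnoc_iff (p : Fin (m + 2)) (σ : Perm (Fin (m + 1))) :
    isTwinEnd (by omega) (permSnoc p σ) ↔ p = (σ 0).castSucc ∨ p = (σ 0).succ := by
  have h0 : permSnoc p σ ⟨0, by omega⟩ = p.succAbove (σ 0) := permSnoc_castSucc p σ 0
  have hlast : permSnoc p σ ⟨m + 2 - 1, by omega⟩ = p := permSnoc_last p σ
  rw [isTwinEnd, h0, hlast, val_succAbove_adjacent_iff]

def twinPair (σ : Perm (Fin (m + 1))) : Sym2 (Perm (Fin (m + 2))) :=
  s(permSnoc (σ 0).castSucc σ, permSnoc (σ 0).succ σ)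

lemma mem_twinPair_iff {x : Perm (Fin (m + 2))} {σ : Perm (Fin (m + 1))} :
    x ∈ twinPair σ ↔
      reduce (firstw (permWord x)) = clusterWord (n := m + 2) σ ∧ isTwinEnd (by omega) x := by
  rw [reduce_firstw_eq_clusterWord_iff, twinPair, Sym2.mem_iff]
  constructor
  · rintro (rfl | rfl)
    all_goals exact ⟨⟨_, rfl⟩, (isTwinEnd_permSnoc_iff _ σ).2 (by simp)⟩
  · rintro ⟨⟨p, rfl⟩, ht⟩
    rcases (isTwinEnd_permSnoc_iff p σ).1 ht with rfl | rfl <;> simp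

lemma twinPair_injective : Function.Injective (twinPair (m := m)) := by
  intro σ τ h
  have hmem : permSnoc (σ 0).castSucc σ ∈ twinPair σ := Sym2.mem_mk_left _ _
  have hσ := mem_twinPair_iff.1 hmem
  have hτ := mem_twinPair_iff.1 (h ▸ hmem)
  exact clusterWord_injective (hσ.1.symm.trans hτ.1)

lemma exists_twins_iff_exists_twinPair (z : Sym2 (Perm (Fin (m + 2)))) :
    (∃ x y : Perm (Fin (m + 2)), z = s(x, y) ∧ x ≠ y ∧
      reduce (firstw (permWord x)) = reduce (firstw (permWord y)) ∧
      isTwinEnd (by omega) x ∧ isTwinEnd (by omega) y) ↔ ∃ σ, twinPair σ = z := by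
  constructor
  · rintro ⟨x, y, rfl, hne, hxy, hx, hy⟩
    obtain ⟨σ, hσ⟩ := exists_eq_permSnoc x
    have hcx : reduce (firstw (permWord x)) = clusterWord (n := m + 2) σ :=
      hσ ▸ reduce_firstw_permSnoc _ σ
    exact ⟨σ, (Sym2.mem_and_mem_iff hne).1
      ⟨mem_twinPair_iff.2 ⟨hcx, hx⟩, mem_twinPair_iff.2 ⟨hxy ▸ hcx, hy⟩⟩⟩
  · rintro ⟨σ, rfl⟩
    have hx := mem_twinPair_iff.1 (Sym2.mem_mk_left (permSnoc (σ 0).castSucc σ) _)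
    have hy := mem_twinPair_iff.1 (Sym2.mem_mk_right _ (permSnoc (σ 0).succ σ))
    exact ⟨_, _, rfl, permSnoc_castSucc_ne_permSnoc_succ _ σ, hx.1.trans hy.1.symm,
      hx.2, hy.2⟩

lemma card_twin_pairs :
    Nat.card {z : Sym2 (Perm (Fin (m + 2))) // ∃ x y : Perm (Fin (m + 2)), z = s(x, y) ∧ x ≠ y ∧
      reduce (firstw (permWord x)) = reduce (firstw (permWord y)) ∧
      isTwinEnd (by omega) x ∧ isTwinEnd (by omega) y} = (m + 1).factorial := by
  rw [Nat.card_congr (Equiv.subtypeEquivRight exists_twins_iff_exists_twinPair)]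
  exact (Nat.card_range_of_injective twinPair_injective).trans (by simp [Fintype.card_perm])

lemma finRotate_castSucc (i : Fin m) : finRotate (m + 1) i.castSucc = i.succ :=
  Fin.ext (by rw [coe_finRotate_of_ne_last (Fin.castSucc_lt_last i).ne]; simp)

lemma lastw_permWord (x : Perm (Fin (m + 1))) :
    lastw (permWord x) = firstw (permWord (x * finRotate (m + 1))) :=
  funext fun i => congrArg (fun j => (x j : ℕ) + 1) (finRotate_castSucc i).symm

lemma castSucc_succAbove_eq_succ_succAbove {a v : Fin (m + 1)} (h : v ≠ a) :
    a.castSucc.succAbove v = a.succ.succAbove v := by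
  rcases h.lt_or_gt with h | h
  · rw [Fin.succAbove_castSucc_of_lt _ _ h, Fin.succAbove_succ_of_le _ _ h.le]
  · rw [Fin.succAbove_castSucc_of_le _ _ h.le, Fin.succAbove_succ_of_lt _ _ h]

lemma permSnoc_mul_finRotate {p : Fin (m + 2)} {σ : Perm (Fin (m + 1))}
    (hp : p = (σ 0).castSucc ∨ p = (σ 0).succ) :
    permSnoc p σ * finRotate (m + 2) = permSnoc (p.succAbove (σ 0)) (σ * finRotate (m + 1)) := by
  -- `p` and `p.succAbove (σ 0)` are the values `σ 0` and `σ 0 + 1` in some order, and exchanging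
  -- them does not move the position of any other value.
  have hswap : (p.succAbove (σ 0)).succAbove (σ 0) = p ∧
      ∀ v ≠ σ 0, (p.succAbove (σ 0)).succAbove v = p.succAbove v := by
    rcases hp with rfl | rfl
    · simpa using fun v hv => (castSucc_succAbove_eq_succ_succAbove hv).symm
    · simpa using fun v hv => castSucc_succAbove_eq_succ_succAbove hv
  ext i
  induction i using Fin.lastCases with
  | last =>
    rw [Perm.mul_apply, finRotate_last, ← Fin.castSucc_zero, permSnoc_castSucc, permSnoc_last]
  | cast i =>
    rw [Perm.mul_apply, finRotate_castSucc, permSnoc_castSucc, Perm.mul_apply]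
    induction i using Fin.lastCases with
    | last => rw [Fin.succ_last, permSnoc_last, finRotate_last, hswap.1]
    | cast j =>
      have hj : σ j.succ ≠ σ 0 := σ.injective.ne (Fin.succ_ne_zero j)
      rw [Fin.succ_castSucc, permSnoc_castSucc, finRotate_castSucc, hswap.2 _ hj]

lemma reduce_lastw_of_mem_twinPair {x : Perm (Fin (m + 2))} {σ : Perm (Fin (m + 1))}
    (hx : x ∈ twinPair σ) :
    reduce (lastw (permWord x)) = clusterWord (n := m + 2) (σ * finRotate (m + 1)) := by
  rw [twinPair, Sym2.mem_iff] at hx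
  rcases hx with rfl | rfl
  all_goals rw [lastw_permWord, permSnoc_mul_finRotate (by simp), reduce_firstw_permSnoc]

lemma exists_twin_double_edge_iff (σ τ : Perm (Fin (m + 1))) :
    (∃ x y : Perm (Fin (m + 2)), x ≠ y ∧ isEdge x σ τ ∧ isEdge y σ τ ∧
      isTwinEnd (by omega) x ∧ isTwinEnd (by omega) y) ↔ σ * finRotate (m + 1) = τ := by
  constructor
  · rintro ⟨x, -, -, ⟨hx, hxτ⟩, -, hxt, -⟩
    exact clusterWord_injective
      ((reduce_lastw_of_mem_twinPair (mem_twinPair_iff.2 ⟨hx, hxt⟩)).symm.trans hxτ)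
  · rintro rfl
    have hx : permSnoc (σ 0).castSucc σ ∈ twinPair σ := Sym2.mem_mk_left _ _
    have hy : permSnoc (σ 0).succ σ ∈ twinPair σ := Sym2.mem_mk_right _ _
    exact ⟨_, _, permSnoc_castSucc_ne_permSnoc_succ _ σ,
      ⟨(mem_twinPair_iff.1 hx).1, reduce_lastw_of_mem_twinPair hx⟩,
      ⟨(mem_twinPair_iff.1 hy).1, reduce_lastw_of_mem_twinPair hy⟩,
      (mem_twinPair_iff.1 hx).2, (mem_twinPair_iff.1 hy).2⟩

open Fin.NatCast

lemma finRotate_succ_pow_apply (k : ℕ) (i : Fin (m + 1)) :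
    (finRotate (m + 1) ^ k) i = i + k := by
  induction k with
  | zero => simp
  | succ k ih => rw [pow_succ', Perm.mul_apply, ih, finRotate_apply, Nat.cast_succ, add_assoc]

lemma finRotate_succ_pow_eq_one_iff (k : ℕ) : finRotate (m + 1) ^ k = 1 ↔ m + 1 ∣ k := by
  rw [← Fin.natCast_eq_zero]
  refine ⟨fun h => by simpa [finRotate_succ_pow_apply] using congr($h 0), fun h => ?_⟩
  ext i
  simp [finRotate_succ_pow_apply, h]

lemma existsUnique_finRotate_pow_apply_eq (a b : Fin (m + 1)) :
    ∃! k, k < m + 1 ∧ (finRotate (m + 1) ^ k) a = b := by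
  refine ⟨(b - a : Fin (m + 1)), ⟨Fin.isLt _, by simp [finRotate_succ_pow_apply]⟩, ?_⟩
  rintro k ⟨hk, hkb⟩
  rw [finRotate_succ_pow_apply] at hkb
  rw [← hkb, add_sub_cancel_left, Fin.val_cast_of_lt hk]

lemma existsUnique_mul_finRotate_pow_eq (σ : Perm (Fin (m + 1))) :
    ∃! ρ : Perm (Fin (m + 1)), ρ 0 = 0 ∧ ∃ k, k < m + 1 ∧ ρ * finRotate (m + 1) ^ k = σ := by
  obtain ⟨k, ⟨hk, hkσ⟩, huniq⟩ := existsUnique_finRotate_pow_apply_eq (σ⁻¹ 0) 0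
  refine ⟨σ * (finRotate (m + 1) ^ k)⁻¹, ⟨?_, k, hk, inv_mul_cancel_right _ _⟩, ?_⟩
  · rw [Perm.mul_apply, Perm.inv_eq_iff_eq.2 hkσ.symm]
    simp
  · rintro ρ ⟨hρ, j, hj, rfl⟩
    have hρ' : ρ.symm 0 = 0 := ρ.symm_apply_eq.2 hρ.symm
    obtain rfl : j = k := huniq j ⟨hj, by simp [mul_inv_rev, hρ']⟩
    exact (mul_inv_cancel_right _ _).symm

lemma card_filter_apply_zero_eq_zero :
    #{ρ : Perm (Fin (m + 1)) | ρ 0 = 0} = m.factorial := by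
  rw [← card_equiv Perm.decomposeFin.symm (s := {0} ×ˢ univ) fun ⟨p, e⟩ => by simp [eq_comm]]
  simp [Fintype.card_perm]

end

/-- The number of pairs of twins among permutations of `[n]` is `(n-1)!`, and the
double edges of the cluster graph decompose into exactly `(n-2)!` vertex-disjoint
directed cycles, each of length `n-1`. -/
theorem twin_pairs_count_and_cycles (n : ℕ) (hn : 3 ≤ n) :
    Nat.card {p : Sym2 (Equiv.Perm (Fin n)) // ∃ x y : Equiv.Perm (Fin n),
        p = s(x, y) ∧ x ≠ y ∧
        reduce (firstw (permWord x)) = reduce (firstw (permWord y)) ∧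
        isTwinEnd (by omega) x ∧ isTwinEnd (by omega) y} = Nat.factorial (n - 1) ∧
    ∃ f : Equiv.Perm (Equiv.Perm (Fin (n - 1))),
      (∀ σ τ : Equiv.Perm (Fin (n - 1)),
        (∃ x y : Equiv.Perm (Fin n), x ≠ y ∧ isEdge x σ τ ∧ isEdge y σ τ ∧
          isTwinEnd (by omega) x ∧ isTwinEnd (by omega) y) ↔ f σ = τ) ∧
      (∀ σ, (f ^ (n - 1)) σ = σ ∧ ∀ m : ℕ, 0 < m → m < n - 1 → (f ^ m) σ ≠ σ) ∧
      ∃ R : Finset (Equiv.Perm (Fin (n - 1))), R.card = Nat.factorial (n - 2) ∧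
        ∀ σ : Equiv.Perm (Fin (n - 1)),
          ∃! ρ : Equiv.Perm (Fin (n - 1)), ρ ∈ R ∧ ∃ m : ℕ, m < n - 1 ∧ (f ^ m) ρ = σ := by
  obtain ⟨m, rfl⟩ : ∃ m, n = m + 2 := ⟨n - 2, by omega⟩
  refine ⟨card_twin_pairs, Equiv.mulRight (finRotate (m + 1)), exists_twin_double_edge_iff,
    fun σ => ⟨?_, fun k hk hkm => ?_⟩, _, card_filter_apply_zero_eq_zero, fun σ => ?_⟩
  · simp [(finRotate_succ_pow_eq_one_iff _).2 dvd_rfl]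
  · simpa [finRotate_succ_pow_eq_one_iff] using Nat.not_dvd_of_pos_of_lt hk hkm
  · simpa using existsUnique_mul_finRotate_pow_eq σ
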